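/- Let g and f be power series converging on D(x,r) with f − f(x) of Weierstrass degree 1 (so |aᵢ|rⁱ ≤ |a₁|r for all i ≥ 1, where f = Σaᵢ(z−x)ⁱ), and suppose |g(y) − f(y)| < γ for all y ∈ D(x,r), where γ < |a₁|r. Then writing g = Σbᵢ(z−x)ⁱ: |b₁| = |a₁|, and g − b₀ also has Weierstrass degree 1 on D(x,r); consequently g maps D(x,r) bijectively onto D(g(x), |a₁|r), and moreover this image disk equals D(f(x), |a₁|r). -/

import Mathlib

open Filter Metric

section PerturbHelpers
set_option linter.unusedSectionVars false
variable {K : Type*} [NontriviallyNormedField K] [CompleteSpace K]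

set_option linter.unusedSectionVars false
variable {K : Type*} [NontriviallyNormedField K] [CompleteSpace K]

-- geometric bound on w^n - w'^n
lemma aux_pow_sub (hna : IsNonarchimedean (norm : K → ℝ)) (w w' : K) (n : ℕ) (hn : 1 ≤ n) :
    ‖w ^ n - w' ^ n‖ ≤ ‖w - w'‖ * (max ‖w‖ ‖w'‖) ^ (n - 1) := by
  haveI : IsUltrametricDist K := IsUltrametricDist.isUltrametricDist_of_isNonarchimedean_norm hna
  set s := max ‖w‖ ‖w'‖ with hsdef
  have hs0 : 0 ≤ s := le_trans (norm_nonneg _) (le_max_left _ _)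
  rw [← geom_sum₂_mul w w' n, norm_mul, mul_comm]
  refine mul_le_mul_of_nonneg_left ?_ (norm_nonneg _)
  refine IsUltrametricDist.norm_sum_le_of_forall_le_of_nonneg (pow_nonneg hs0 _) ?_
  intro i hi
  rw [Finset.mem_range] at hi
  have h1 : ‖w ^ i * w' ^ (n - 1 - i)‖ ≤ s ^ i * s ^ (n - 1 - i) := by
    rw [norm_mul, norm_pow, norm_pow]
    exact mul_le_mul (pow_le_pow_left₀ (norm_nonneg _) (le_max_left _ _) _)
      (pow_le_pow_left₀ (norm_nonneg _) (le_max_right _ _) _) (pow_nonneg (norm_nonneg _) _)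
      (pow_nonneg hs0 _)
  refine h1.trans ?_
  rw [← pow_add]
  have h2 : i + (n - 1 - i) = n - 1 := by omega
  rw [h2]

set_option linter.unusedSectionVars false
variable {K : Type*} [NontriviallyNormedField K] [CompleteSpace K]

lemma aux_norm_add_eq (hna : IsNonarchimedean (norm : K → ℝ)) {u v : K}
    (h : ‖v‖ < ‖u‖) : ‖u + v‖ = ‖u‖ := by
  refine le_antisymm ((hna u v).trans (max_le le_rfl h.le)) ?_
  by_contra hlt
  push_neg at hlt
  have h2 : ‖u‖ ≤ max ‖u + v‖ ‖-v‖ := by simpa using hna (u + v) (-v)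
  rw [norm_neg] at h2
  exact absurd h2 (not_le.2 (max_lt hlt h))

lemma aux_summable (hna : IsNonarchimedean (norm : K → ℝ))
    {c : ℕ → K} {r : ℝ} (hr : 0 < r)
    (hconv : ∀ s : ℝ, 0 < s → s < r → Tendsto (fun n => ‖c n‖ * s ^ n) atTop (nhds 0))
    {w : K} (hw : ‖w‖ < r) : Summable (fun n => c n * w ^ n) := by
  haveI : IsUltrametricDist K := IsUltrametricDist.isUltrametricDist_of_isNonarchimedean_norm hna
  set s := max ‖w‖ (r / 2) with hs
  have hs0 : 0 < s := lt_max_of_lt_right (by linarith)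
  have hsr : s < r := max_lt hw (by linarith)
  have h0 : Tendsto (fun n => ‖c n‖ * s ^ n) atTop (nhds 0) := hconv s hs0 hsr
  have ht : Tendsto (fun n => c n * w ^ n) atTop (nhds 0) := by
    rw [tendsto_zero_iff_norm_tendsto_zero]
    refine squeeze_zero (fun n => norm_nonneg _) (fun n => ?_) h0
    rw [norm_mul, norm_pow]
    exact mul_le_mul_of_nonneg_left (pow_le_pow_left₀ (norm_nonneg _) (le_max_left _ _) n)
      (norm_nonneg _)
  exact NonarchimedeanAddGroup.summable_of_tendsto_cofinite_zero
    (by rwa [Nat.cofinite_eq_atTop])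

lemma aux_key (hna : IsNonarchimedean (norm : K → ℝ)) {c : ℕ → K} {r : ℝ} (hr : 0 < r)
    (hdeg : ∀ i : ℕ, 1 ≤ i → ‖c i‖ * r ^ i ≤ ‖c 1‖ * r)
    (hconv : ∀ s : ℝ, 0 < s → s < r → Tendsto (fun n => ‖c n‖ * s ^ n) atTop (nhds 0))
    {w w' : K} (hw : ‖w‖ < r) (hw' : ‖w'‖ < r) :
    ‖(∑' n, c n * w ^ n) - (∑' n, c n * w' ^ n) - c 1 * (w - w')‖
      ≤ ‖c 1‖ * (max ‖w‖ ‖w'‖ / r) * ‖w - w'‖ := by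
  haveI : IsUltrametricDist K := IsUltrametricDist.isUltrametricDist_of_isNonarchimedean_norm hna
  set s := max ‖w‖ ‖w'‖ with hsdef
  have hs0 : 0 ≤ s := le_trans (norm_nonneg _) (le_max_left _ _)
  have hsr : s < r := max_lt hw hw'
  have hsum : Summable (fun n => c n * w ^ n) := aux_summable hna hr hconv hw
  have hsum' : Summable (fun n => c n * w' ^ n) := aux_summable hna hr hconv hw'
  set f : ℕ → K := fun n => c n * w ^ n - c n * w' ^ n with hf
  have hsumf : Summable f := hsum.sub hsum'
  have h1 : (∑' n, c n * w ^ n) - (∑' n, c n * w' ^ n) = ∑' n, f n :=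
    (Summable.tsum_sub hsum hsum').symm
  have hf1 : f 1 = c 1 * (w - w') := by simp [hf, mul_sub]
  have h2 : (∑' n, f n) = f 1 + ∑' n, if n = 1 then 0 else f n := Summable.tsum_eq_add_tsum_ite hsumf 1
  rw [h1, h2, hf1, add_sub_cancel_left]
  have hC0 : 0 ≤ ‖c 1‖ * (s / r) * ‖w - w'‖ := by positivity
  refine IsUltrametricDist.norm_tsum_le_of_forall_le_of_nonneg hC0 (fun n => ?_)
  by_cases hn1 : n = 1
  · simpa [hn1] using hC0
  rcases Nat.eq_zero_or_pos n with hn0 | hnpos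
  · simp only [hn0, if_neg (by omega : (0:ℕ) ≠ 1)]
    simpa [hf] using hC0
  -- n ≥ 2
  have hn2 : 2 ≤ n := by omega
  obtain ⟨m, rfl⟩ : ∃ m, n = m + 1 := ⟨n - 1, by omega⟩
  have hm1 : 1 ≤ m := by omega
  rw [if_neg hn1]
  have hfn : f (m + 1) = c (m + 1) * (w ^ (m + 1) - w' ^ (m + 1)) := by
    simp [hf, mul_sub]
  rw [hfn, norm_mul]
  have hps : ‖w ^ (m + 1) - w' ^ (m + 1)‖ ≤ ‖w - w'‖ * s ^ m := by
    simpa using aux_pow_sub hna w w' (m + 1) (by omega)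
  have e2 : ‖c (m + 1)‖ ≤ ‖c 1‖ * r / r ^ (m + 1) := by
    rw [le_div_iff₀ (pow_pos hr _)]
    exact hdeg (m + 1) (by omega)
  have key : ‖c (m + 1)‖ * s ^ m ≤ ‖c 1‖ * (s / r) :=
    calc ‖c (m + 1)‖ * s ^ m ≤ (‖c 1‖ * r / r ^ (m + 1)) * s ^ m :=
          mul_le_mul_of_nonneg_right e2 (pow_nonneg hs0 m)
      _ = ‖c 1‖ * (s / r) ^ m := by
          rw [div_pow, pow_succ]
          field_simp
      _ ≤ ‖c 1‖ * (s / r) ^ 1 := by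
          refine mul_le_mul_of_nonneg_left ?_ (norm_nonneg _)
          exact pow_le_pow_of_le_one (by positivity) ((div_le_one hr).2 hsr.le) hm1
      _ = ‖c 1‖ * (s / r) := by rw [pow_one]
  calc ‖c (m + 1)‖ * ‖w ^ (m + 1) - w' ^ (m + 1)‖
      ≤ ‖c (m + 1)‖ * (‖w - w'‖ * s ^ m) :=
        mul_le_mul_of_nonneg_left hps (norm_nonneg _)
    _ = (‖c (m + 1)‖ * s ^ m) * ‖w - w'‖ := by ring
    _ ≤ (‖c 1‖ * (s / r)) * ‖w - w'‖ :=
        mul_le_mul_of_nonneg_right key (norm_nonneg _)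
    _ = ‖c 1‖ * (s / r) * ‖w - w'‖ := by ring

lemma aux_at_zero (c : ℕ → K) : (∑' n, c n * (0 : K) ^ n) = c 0 := by
  rw [tsum_eq_single 0 (fun n hn => by simp [zero_pow hn])]
  simp

lemma aux_ball_eq (hna : IsNonarchimedean (norm : K → ℝ)) {u v : K} {R : ℝ}
    (h : ‖v - u‖ < R) : ball v R = ball u R := by
  ext z
  simp only [mem_ball_iff_norm]
  constructor
  · intro hz
    have : ‖(z - v) + (v - u)‖ ≤ max ‖z - v‖ ‖v - u‖ := hna _ _
    simpa using this.trans_lt (max_lt hz h)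
  · intro hz
    have : ‖(z - u) + (u - v)‖ ≤ max ‖z - u‖ ‖u - v‖ := hna _ _
    rw [show u - v = -(v - u) by ring, norm_neg] at this
    simpa using this.trans_lt (max_lt hz h)
lemma aux_isom (hna : IsNonarchimedean (norm : K → ℝ)) {c : ℕ → K} {r : ℝ} (hr : 0 < r)
    (hc1 : c 1 ≠ 0)
    (hdeg : ∀ i : ℕ, 1 ≤ i → ‖c i‖ * r ^ i ≤ ‖c 1‖ * r)
    (hconv : ∀ s : ℝ, 0 < s → s < r → Tendsto (fun n => ‖c n‖ * s ^ n) atTop (nhds 0))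
    {w w' : K} (hw : ‖w‖ < r) (hw' : ‖w'‖ < r) :
    ‖(∑' n, c n * w ^ n) - (∑' n, c n * w' ^ n)‖ = ‖c 1‖ * ‖w - w'‖ := by
  rcases eq_or_ne w w' with rfl | hne
  · simp
  have hsub : w - w' ≠ 0 := sub_ne_zero.2 hne
  have hc1p : (0:ℝ) < ‖c 1‖ := norm_pos_iff.2 hc1
  have hsubp : (0:ℝ) < ‖w - w'‖ := norm_pos_iff.2 hsub
  have hk := aux_key hna hr hdeg hconv hw hw'
  have hsr : max ‖w‖ ‖w'‖ / r < 1 := (div_lt_one hr).2 (max_lt hw hw')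
  have hstrict : ‖(∑' n, c n * w ^ n) - (∑' n, c n * w' ^ n) - c 1 * (w - w')‖
      < ‖c 1 * (w - w')‖ := by
    rw [norm_mul]
    refine hk.trans_lt ?_
    have h0 : (0:ℝ) ≤ max ‖w‖ ‖w'‖ / r := by positivity
    nlinarith [mul_pos hc1p hsubp]
  have heq := aux_norm_add_eq hna (u := c 1 * (w - w'))
    (v := (∑' n, c n * w ^ n) - (∑' n, c n * w' ^ n) - c 1 * (w - w')) hstrict
  rw [add_sub_cancel] at heq
  rw [heq, norm_mul]

lemma aux_surj (hna : IsNonarchimedean (norm : K → ℝ)) {c : ℕ → K} {r : ℝ} (hr : 0 < r)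
    (hc1 : c 1 ≠ 0)
    (hdeg : ∀ i : ℕ, 1 ≤ i → ‖c i‖ * r ^ i ≤ ‖c 1‖ * r)
    (hconv : ∀ s : ℝ, 0 < s → s < r → Tendsto (fun n => ‖c n‖ * s ^ n) atTop (nhds 0))
    {t : K} (ht : ‖t - c 0‖ < ‖c 1‖ * r) :
    ∃ w : K, ‖w‖ < r ∧ (∑' n, c n * w ^ n) = t := by
  have hc1p : (0:ℝ) < ‖c 1‖ := norm_pos_iff.2 hc1
  set ρ : ℝ := ‖t - c 0‖ / ‖c 1‖ with hρdef
  have hρ0 : 0 ≤ ρ := by positivity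
  have hρr : ρ < r := (div_lt_iff₀' hc1p).2 ht
  set φ : K → K := fun w => w - ((∑' n, c n * w ^ n) - t) / c 1 with hφdef
  have hkey0 : ∀ w : K, ‖w‖ < r →
      ‖(∑' n, c n * w ^ n) - c 0 - c 1 * w‖ ≤ ‖c 1‖ * (‖w‖ / r) * ‖w‖ := by
    intro w hw
    have := aux_key hna hr hdeg hconv hw (by simpa using hr : ‖(0:K)‖ < r)
    simpa [aux_at_zero, max_eq_left (norm_nonneg w)] using this
  have hmaps : Set.MapsTo φ (closedBall (0:K) ρ) (closedBall (0:K) ρ) := by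
    intro w hw
    rw [mem_closedBall_zero_iff] at hw ⊢
    have hwr : ‖w‖ < r := lt_of_le_of_lt hw hρr
    have hrepr : φ w = (t - c 0) / c 1 +
        (-(((∑' n, c n * w ^ n) - c 0 - c 1 * w) / c 1)) := by
      simp only [hφdef]
      field_simp
      ring
    rw [hrepr]
    refine (hna _ _).trans (max_le ?_ ?_)
    · rw [norm_div]
    · rw [norm_neg, norm_div]
      have h1 := hkey0 w hwr
      have h2 : ‖c 1‖ * (‖w‖ / r) * ‖w‖ ≤ ‖c 1‖ * (ρ / r) * ρ := by gcongr
      have h3 : ‖c 1‖ * (ρ / r) * ρ ≤ ‖c 1‖ * 1 * ρ := by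
        gcongr
        exact (div_le_one hr).2 hρr.le
      rw [div_le_iff₀ hc1p]
      nlinarith
  have hlip : ∀ w ∈ closedBall (0:K) ρ, ∀ w' ∈ closedBall (0:K) ρ,
      ‖φ w - φ w'‖ ≤ (ρ / r) * ‖w - w'‖ := by
    intro w hw w' hw'
    rw [mem_closedBall_zero_iff] at hw hw'
    have hwr : ‖w‖ < r := lt_of_le_of_lt hw hρr
    have hw'r : ‖w'‖ < r := lt_of_le_of_lt hw' hρr
    have hrepr : φ w - φ w' =
        -((((∑' n, c n * w ^ n) - (∑' n, c n * w' ^ n)) - c 1 * (w - w')) / c 1) := by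
      simp only [hφdef]
      field_simp
      ring
    rw [hrepr, norm_neg, norm_div, div_le_iff₀ hc1p]
    refine (aux_key hna hr hdeg hconv hwr hw'r).trans ?_
    have hmax : max ‖w‖ ‖w'‖ ≤ ρ := max_le hw hw'
    have h2 : ‖c 1‖ * (max ‖w‖ ‖w'‖ / r) * ‖w - w'‖ ≤ ‖c 1‖ * (ρ / r) * ‖w - w'‖ := by
      gcongr
    nlinarith
  -- Banach fixed point on the closed ball
  set Kc : NNReal := ⟨ρ / r, by positivity⟩ with hKc
  have hsc : IsComplete (closedBall (0:K) ρ) := IsClosed.isComplete Metric.isClosed_closedBall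
  have hcontr : ContractingWith Kc (hmaps.restrict φ _ _) := by
    constructor
    · rw [← NNReal.coe_lt_coe]
      exact (div_lt_one hr).2 hρr
    · refine LipschitzWith.of_dist_le_mul fun p q => ?_
      have := hlip p.1 p.2 q.1 q.2
      simp [Subtype.dist_eq, dist_eq_norm] at this ⊢
      exact this
  obtain ⟨y, hy, hyfix, -, -⟩ := hcontr.exists_fixedPoint' hsc hmaps
    (show (0:K) ∈ closedBall (0:K) ρ by simpa using hρ0) (edist_ne_top _ _)
  refine ⟨y, lt_of_le_of_lt (mem_closedBall_zero_iff.1 hy) hρr, ?_⟩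
  have : y - ((∑' n, c n * y ^ n) - t) / c 1 = y := hyfix
  have h0 : ((∑' n, c n * y ^ n) - t) / c 1 = 0 := sub_eq_self.mp this
  exact sub_eq_zero.1 ((div_eq_zero_iff.1 h0).resolve_right hc1)

end PerturbHelpers

/-- Core of Lemma 5.7 (inj): let `f = Σ aᵢ(z−x)ⁱ` and `g = Σ bᵢ(z−x)ⁱ` converge on
`D(x,r)` with `f − a₀` of Weierstrass degree 1 (`|aᵢ| rⁱ ≤ |a₁| r` for `i ≥ 1`, `a₁ ≠ 0`)
and `|bᵢ − aᵢ| rⁱ ≤ γ < |a₁| r` for all `i`.  Then `|b₁| = |a₁|`; `g − b₀` also has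
Weierstrass degree 1 on `D(x,r)`; `g` maps `D(x,r)` bijectively onto `D(g(x), |a₁| r)`;
and this image disk equals `D(f(x), |a₁| r)`. -/
theorem perturbed_series_still_degree_one {K : Type*} [NontriviallyNormedField K]
    [CompleteSpace K] [IsAlgClosed K] [CharZero K]
    (hna : IsNonarchimedean (norm : K → ℝ))
    (x : K) (r γ : ℝ) (hr : 0 < r) (a b : ℕ → K) (ha1 : a 1 ≠ 0)
    (haconv : ∀ s : ℝ, 0 < s → s < r →
      Tendsto (fun n => ‖a n‖ * s ^ n) atTop (nhds 0))
    (hbconv : ∀ s : ℝ, 0 < s → s < r →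
      Tendsto (fun n => ‖b n‖ * s ^ n) atTop (nhds 0))
    (hdeg : ∀ i : ℕ, 1 ≤ i → ‖a i‖ * r ^ i ≤ ‖a 1‖ * r)
    (hγ : γ < ‖a 1‖ * r)
    (hclose : ∀ i : ℕ, ‖b i - a i‖ * r ^ i ≤ γ) :
    ‖b 1‖ = ‖a 1‖ ∧
    (∀ i : ℕ, 1 ≤ i → ‖b i‖ * r ^ i ≤ ‖b 1‖ * r) ∧
    Set.BijOn (fun y => ∑' n, b n * (y - x) ^ n) (ball x r)
      (ball (∑' n, a n * (0 : K) ^ n) (‖a 1‖ * r)) ∧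
    ball (∑' n, b n * (0 : K) ^ n) (‖a 1‖ * r) =
      ball (∑' n, a n * (0 : K) ^ n) (‖a 1‖ * r) := by
  have ha1p : (0:ℝ) < ‖a 1‖ := norm_pos_iff.2 ha1
  have hc0 : ‖b 0 - a 0‖ ≤ γ := by simpa using hclose 0
  -- |b1| = |a1|
  have hb1a1 : ‖b 1 - a 1‖ < ‖a 1‖ := by
    have h1 : ‖b 1 - a 1‖ * r ≤ γ := by simpa using hclose 1
    have := h1.trans_lt hγ
    exact lt_of_mul_lt_mul_right this hr.le
  have part1 : ‖b 1‖ = ‖a 1‖ := by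
    have := aux_norm_add_eq hna (u := a 1) (v := b 1 - a 1) hb1a1
    simpa using this
  -- degree-1 bound for b
  have part2 : ∀ i : ℕ, 1 ≤ i → ‖b i‖ * r ^ i ≤ ‖b 1‖ * r := by
    intro i hi
    rw [part1]
    have h1 : ‖b i‖ ≤ max ‖a i‖ ‖b i - a i‖ := by
      simpa using hna (a i) (b i - a i)
    have h2 : ‖b i‖ * r ^ i ≤ max (‖a i‖ * r ^ i) (‖b i - a i‖ * r ^ i) := by
      rw [← max_mul_of_nonneg _ _ (by positivity : (0:ℝ) ≤ r ^ i)]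
      exact mul_le_mul_of_nonneg_right h1 (by positivity)
    exact h2.trans (max_le (hdeg i hi) ((hclose i).trans hγ.le))
  have hb1 : b 1 ≠ 0 := by
    intro h
    rw [h, norm_zero] at part1
    exact ha1 (norm_eq_zero.1 part1.symm)
  have hbdeg : ∀ i : ℕ, 1 ≤ i → ‖b i‖ * r ^ i ≤ ‖b 1‖ * r := part2
  -- the two image balls agree
  have hball : ball (∑' n, b n * (0 : K) ^ n) (‖a 1‖ * r) =
      ball (∑' n, a n * (0 : K) ^ n) (‖a 1‖ * r) := by
    rw [aux_at_zero a, aux_at_zero b]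
    exact aux_ball_eq hna (hc0.trans_lt hγ)
  refine ⟨part1, part2, ?_, hball⟩
  -- BijOn statement
  have hb0mem : ∀ z : K, z ∈ ball (∑' n, a n * (0 : K) ^ n) (‖a 1‖ * r) ↔
      ‖z - b 0‖ < ‖a 1‖ * r := by
    intro z
    rw [← hball, aux_at_zero b, mem_ball_iff_norm]
  refine ⟨?_, ?_, ?_⟩
  · -- MapsTo
    intro y hy
    rw [mem_ball_iff_norm] at hy
    rw [hb0mem]
    have := aux_isom hna hr hb1 hbdeg hbconv (w := y - x) (w' := 0) hy (by simpa using hr)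
    rw [aux_at_zero b, sub_zero] at this
    rw [this, ← part1] at *
    exact (mul_lt_mul_iff_right₀ (norm_pos_iff.2 hb1)).2 hy
  · -- InjOn
    intro y hy y' hy' heq
    rw [mem_ball_iff_norm] at hy hy'
    have heq' : (∑' n, b n * (y - x) ^ n) = ∑' n, b n * (y' - x) ^ n := heq
    have := aux_isom hna hr hb1 hbdeg hbconv (w := y - x) (w' := y' - x) hy hy'
    rw [heq'] at this
    simp only [sub_self, norm_zero] at this
    have h2 : ‖(y - x) - (y' - x)‖ = 0 := by
      have hb1p : (0:ℝ) < ‖b 1‖ := norm_pos_iff.2 hb1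
      nlinarith [norm_nonneg ((y - x) - (y' - x))]
    have : y - x = y' - x := by
      rw [← sub_eq_zero]
      exact norm_eq_zero.1 h2
    linear_combination this
  · -- SurjOn
    intro t ht
    rw [hb0mem] at ht
    rw [← part1] at ht
    obtain ⟨w, hwr, hwt⟩ := aux_surj hna hr hb1 hbdeg hbconv ht
    refine ⟨x + w, ?_, ?_⟩
    · rw [mem_ball_iff_norm]
      simpa using hwr
    · simpa using hwt
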